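/- Let $t, r > 0$, $\alpha_0, c_1 > 0$, and for $n \in \mathbb{Z}$ and $\delta > 0$ let $z_\delta(n) = |a(n)|^2 + \alpha_0\delta^2(1+n^2)^r$ where $|a(n)|^2 \geq c_1^2 (1+n^2)^{-t}$. Then with $\eta = t/(2(t+r))$ and $\gamma = r/(2(t+r))$ one has, for all $n$ and $\delta > 0$, $\frac{\alpha_0\delta^2(1+n^2)^r}{z_\delta(n)} \leq c_1^{-2\gamma} (\alpha_0 \delta^2)^{1/2 - \eta} (1+n^2)^{r/2}$. -/

import Mathlib

/-!
Since `z_δ(n)` dominates both `A = α₀δ²(1+n²)^r` and `b = c₁²(1+n²)^(-t)`, the ratio `A / z_δ(n)`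
lies in `[0, 1]` and is at most `A / b`; hence for `0 ≤ γ ≤ 1` it is bounded by
`(A / z_δ(n))^γ ≤ (A / b)^γ`. With `γ = r/(2(t+r))` the powers of `1+n²` in `(A / b)^γ` combine to
`(1+n²)^((t+r)γ) = (1+n²)^(r/2)`, and `1/2 - η = γ`.
-/

open Real

lemma div_le_div_rpow_of_le {A b z γ : ℝ} (hA : 0 ≤ A) (hb : 0 < b) (hAz : A ≤ z) (hbz : b ≤ z)
    (hγ₀ : 0 ≤ γ) (hγ₁ : γ ≤ 1) : A / z ≤ (A / b) ^ γ :=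
  have hz : 0 < z := hb.trans_le hbz
  have hAz₀ : 0 ≤ A / z := div_nonneg hA hz.le
  calc A / z ≤ (A / z) ^ γ := self_le_rpow_of_le_one hAz₀ ((div_le_one hz).2 hAz) hγ₁
    _ ≤ (A / b) ^ γ := rpow_le_rpow hAz₀ (div_le_div_of_nonneg_left hA hb hbz) hγ₀

lemma rpow_mul_rpow_div_sq_mul_rpow_neg {B c N : ℝ} (hB : 0 ≤ B) (hc : 0 < c) (hN : 0 < N)
    (r t γ : ℝ) :
    (B * N ^ r / (c ^ 2 * N ^ (-t))) ^ γ = c ^ (-(2 * γ)) * B ^ γ * N ^ ((t + r) * γ) := by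
  have hquot : B * N ^ r / (c ^ 2 * N ^ (-t)) = c ^ (-2 : ℝ) * B * N ^ (t + r) := by
    rw [rpow_neg hN.le, rpow_add hN, rpow_neg hc.le, rpow_two]
    field_simp
  rw [hquot, mul_rpow (by positivity) (by positivity), mul_rpow (by positivity) hB,
    ← rpow_mul hc.le, ← rpow_mul hN.le, neg_mul]

/-- Pointwise Fourier-side interpolation estimate: with
`z_δ(n) = |a(n)|² + α₀δ²(1+n²)^r` and `|a(n)|² ≥ c₁²(1+n²)^(-t)`, setting
`η = t/(2(t+r))` and `γ = r/(2(t+r))`, one has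
`α₀δ²(1+n²)^r / z_δ(n) ≤ c₁^(-2γ) (α₀δ²)^(1/2-η) (1+n²)^(r/2)`. -/
theorem stmt_7 (t r : ℝ) (ht : 0 < t) (hr : 0 < r)
    (α₀ c₁ : ℝ) (hα₀ : 0 < α₀) (hc₁ : 0 < c₁)
    (a : ℤ → ℂ)
    (ha : ∀ n : ℤ, c₁ ^ 2 * (1 + (n : ℝ) ^ 2) ^ (-t) ≤ ‖a n‖ ^ 2) :
    ∀ (n : ℤ) (δ : ℝ), 0 < δ →
      α₀ * δ ^ 2 * (1 + (n : ℝ) ^ 2) ^ r /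
          (‖a n‖ ^ 2 + α₀ * δ ^ 2 * (1 + (n : ℝ) ^ 2) ^ r)
        ≤ c₁ ^ (-(2 * (r / (2 * (t + r))))) *
            (α₀ * δ ^ 2) ^ (1 / 2 - t / (2 * (t + r))) *
            (1 + (n : ℝ) ^ 2) ^ (r / 2) := by
  intro n δ hδ
  have htr : 0 < t + r := by linarith
  set γ := r / (2 * (t + r)) with hγ
  have hγ₀ : 0 ≤ γ := by positivity
  have hγ₁ : γ ≤ 1 := by rw [hγ, div_le_one (by positivity)]; linarith
  have hη : 1 / 2 - t / (2 * (t + r)) = γ := by rw [hγ]; field_simp; ring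
  have hexp : (t + r) * γ = r / 2 := by rw [hγ]; field_simp
  have hA : 0 ≤ α₀ * δ ^ 2 * (1 + (n : ℝ) ^ 2) ^ r := by positivity
  calc _ ≤ (α₀ * δ ^ 2 * (1 + (n : ℝ) ^ 2) ^ r / (c₁ ^ 2 * (1 + (n : ℝ) ^ 2) ^ (-t))) ^ γ :=
        div_le_div_rpow_of_le hA (by positivity) (le_add_of_nonneg_left (sq_nonneg _))
          ((ha n).trans (le_add_of_nonneg_right hA)) hγ₀ hγ₁
    _ = _ := by
      rw [rpow_mul_rpow_div_sq_mul_rpow_neg (by positivity) hc₁ (by positivity), hexp, hη]
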